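/- arXiv:2604.22165 — 4 statements merged into one kernel-verified Lean document; each statement's English description precedes it below -/
import Mathlib

section
/- For every x ∈ ℝ and a > 1, the identity (cos(x/n) + i a sin(x/n))^n = Σ_{j=0}^n C_j(n,a) e^{i(1−2j/n)x} holds, where C_j(n,a) = C(n,j) ((1+a)/2)^{n−j} ((1−a)/2)^j. -/
open Complex

/-- The classical superoscillating sequence as a finite sum of plane waves. -/
theorem stmt4 (n : ℕ) (hn : 0 < n) (x : ℝ) (a : ℝ) (ha : 1 < a) :
    (Complex.cos (x / n) + Complex.I * a * Complex.sin (x / n)) ^ n =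
      ∑ j ∈ Finset.range (n + 1),
        ((n.choose j : ℂ) * (((1 + (a : ℂ)) / 2)) ^ (n - j) * (((1 - (a : ℂ)) / 2)) ^ j) *
          Complex.exp (Complex.I * (1 - 2 * (j : ℂ) / n) * x) := by
  have hn' : (n : ℂ) ≠ 0 := Nat.cast_ne_zero.mpr hn.ne'
  set θ : ℂ := (x : ℂ) / n with hθ
  have hbase : Complex.cos θ + Complex.I * a * Complex.sin θ =
      ((1 - (a : ℂ)) / 2) * Complex.exp (-(Complex.I * θ)) +
        ((1 + (a : ℂ)) / 2) * Complex.exp (Complex.I * θ) := by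
    rw [Complex.cos, Complex.sin]
    have hI := Complex.I_ne_zero
    field_simp
    simp only [mul_comm θ Complex.I]
    linear_combination ((a : ℂ) * (Complex.exp (-(Complex.I * θ)) - Complex.exp (Complex.I * θ))) * Complex.I_mul_I
  rw [hbase, add_pow]
  apply Finset.sum_congr rfl
  intro j hj
  have hjn : j ≤ n := Nat.lt_succ_iff.mp (Finset.mem_range.mp hj)
  have hexp : (j : ℂ) * -(Complex.I * θ) + (n - j : ℕ) * (Complex.I * θ) =
      Complex.I * (1 - 2 * (j : ℂ) / n) * x := by
    push_cast [hjn]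
    rw [hθ]
    field_simp
    ring
  have h1 : Complex.exp (Complex.I * (1 - 2 * (j : ℂ) / n) * x) =
      Complex.exp ((j : ℂ) * -(Complex.I * θ)) * Complex.exp ((n - j : ℕ) * (Complex.I * θ)) := by
    rw [← Complex.exp_add, hexp]
  rw [mul_pow, mul_pow, ← Complex.exp_nat_mul, ← Complex.exp_nat_mul, h1]
  ring
end

section
/- For fixed x ∈ ℝ and a ∈ ℝ, the sequence F_n(x,a) = (cos(x/n) + i a sin(x/n))^n converges to e^{iax} as n → ∞, and the convergence is uniform on compact subsets of ℝ. -/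
open Complex Filter

/-- Step A: quadratic estimate for `cos t + i a sin t - exp(i a t)`. -/
lemma stmt5_aux_A (a t : ℝ) (ht : |t| ≤ 1) (hat : |a * t| ≤ 1) :
    ‖(Complex.cos t + Complex.I * a * Complex.sin t
      - Complex.exp (Complex.I * a * t))‖ ≤ (1 + |a| + a ^ 2) * t ^ 2 := by
  have habsI : ‖((t : ℂ) * Complex.I)‖ = |t| := by
    simp [map_mul]
  have habsI' : ‖(-((t : ℂ) * Complex.I))‖ = |t| := by
    simpa using habsI
  have habs3 : ‖(Complex.I * a * t)‖ = |a * t| := by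
    rw [show Complex.I * (a : ℂ) * (t : ℂ) = ((a * t : ℝ) : ℂ) * Complex.I by push_cast; ring]
    simp [map_mul, abs_mul]
  have h1 : ‖(Complex.exp ((t : ℂ) * Complex.I) - 1 - (t : ℂ) * Complex.I)‖
      ≤ t ^ 2 := by
    have := Complex.norm_exp_sub_one_sub_id_le (x := (t : ℂ) * Complex.I) (by rw [habsI]; exact ht)
    rwa [habsI, _root_.sq_abs] at this
  have h2 : ‖(Complex.exp (-((t : ℂ) * Complex.I)) - 1 + (t : ℂ) * Complex.I)‖
      ≤ t ^ 2 := by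
    have := Complex.norm_exp_sub_one_sub_id_le (x := -((t : ℂ) * Complex.I))
      (by rw [habsI']; exact ht)
    rw [habsI', _root_.sq_abs, sub_neg_eq_add] at this
    exact this
  have h3 : ‖(Complex.exp (Complex.I * a * t) - 1 - Complex.I * a * t)‖
      ≤ a ^ 2 * t ^ 2 := by
    have := Complex.norm_exp_sub_one_sub_id_le (x := Complex.I * a * t)
      (by rw [habs3]; exact hat)
    rw [habs3, _root_.sq_abs] at this
    calc ‖(Complex.exp (Complex.I * a * t) - 1 - Complex.I * a * t)‖
        ≤ (a * t) ^ 2 := this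
      _ = a ^ 2 * t ^ 2 := by ring
  set E1 : ℂ := Complex.exp ((t : ℂ) * Complex.I) - 1 - (t : ℂ) * Complex.I with hE1
  set E2 : ℂ := Complex.exp (-((t : ℂ) * Complex.I)) - 1 + (t : ℂ) * Complex.I with hE2
  set E3 : ℂ := Complex.exp (Complex.I * a * t) - 1 - Complex.I * a * t with hE3
  have hid : Complex.cos t + Complex.I * a * Complex.sin t - Complex.exp (Complex.I * a * t)
      = (((1 + a) / 2 : ℝ) : ℂ) * E1 + (((1 - a) / 2 : ℝ) : ℂ) * E2 - E3 := by
    rw [hE1, hE2, hE3]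
    simp only [Complex.cos, Complex.sin]
    push_cast
    ring_nf
    simp only [Complex.I_sq]
    ring
  rw [hid]
  have habs : ‖((((1 + a) / 2 : ℝ) : ℂ) * E1 + (((1 - a) / 2 : ℝ) : ℂ) * E2 - E3)‖
      ≤ |(1 + a) / 2| * ‖E1‖ + |(1 - a) / 2| * ‖E2‖ + ‖E3‖ := by
    refine (norm_sub_le _ _).trans ?_
    gcongr
    refine (norm_add_le _ _).trans ?_
    simp only [norm_mul, Complex.norm_real, Real.norm_eq_abs]
    exact le_refl _
  refine habs.trans ?_
  have hc1 : |(1 + a) / 2| ≤ (1 + |a|) / 2 := by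
    rw [abs_div, _root_.abs_two]
    gcongr
    exact (abs_add_le _ _).trans (by simp)
  have hc2 : |(1 - a) / 2| ≤ (1 + |a|) / 2 := by
    rw [abs_div, _root_.abs_two]
    gcongr
    exact (abs_sub _ _).trans (by simp)
  have hA1 : |(1 + a) / 2| * ‖E1‖ ≤ (1 + |a|) / 2 * t ^ 2 :=
    mul_le_mul hc1 h1 (norm_nonneg _) (by positivity)
  have hA2 : |(1 - a) / 2| * ‖E2‖ ≤ (1 + |a|) / 2 * t ^ 2 :=
    mul_le_mul hc2 h2 (norm_nonneg _) (by positivity)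
  calc |(1 + a) / 2| * ‖E1‖ + |(1 - a) / 2| * ‖E2‖ + ‖E3‖
      ≤ (1 + |a|) / 2 * t ^ 2 + (1 + |a|) / 2 * t ^ 2 + a ^ 2 * t ^ 2 := by
        exact add_le_add (add_le_add hA1 hA2) h3
    _ = (1 + |a| + a ^ 2) * t ^ 2 := by ring

/-- Step B: growth bound for `cos t + i a sin t`. -/
lemma stmt5_aux_B (a t : ℝ) :
    ‖(Complex.cos t + Complex.I * a * Complex.sin t)‖
      ≤ Real.exp (a ^ 2 * t ^ 2 / 2) := by
  have hz : Complex.cos t + Complex.I * a * Complex.sin t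
      = ((Real.cos t : ℝ) : ℂ) + ((a * Real.sin t : ℝ) : ℂ) * Complex.I := by
    rw [← Complex.ofReal_cos, ← Complex.ofReal_sin]
    push_cast
    ring
  have hsq : ‖(Complex.cos t + Complex.I * a * Complex.sin t)‖ ^ 2
      = Real.cos t ^ 2 + (a * Real.sin t) ^ 2 := by
    rw [hz, Complex.sq_norm, Complex.normSq_add_mul_I]
  have h1 : Real.cos t ^ 2 + (a * Real.sin t) ^ 2 ≤ 1 + a ^ 2 * t ^ 2 := by
    have hs := Real.sin_sq_add_cos_sq t
    have hs2 : Real.sin t ^ 2 ≤ t ^ 2 := Real.sin_sq_le_sq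
    nlinarith [sq_nonneg a]
  have h2 : (1 : ℝ) + a ^ 2 * t ^ 2 ≤ Real.exp (a ^ 2 * t ^ 2 / 2) ^ 2 := by
    have := Real.add_one_le_exp (a ^ 2 * t ^ 2)
    have he : Real.exp (a ^ 2 * t ^ 2 / 2) ^ 2 = Real.exp (a ^ 2 * t ^ 2) := by
      rw [sq, ← Real.exp_add]; ring_nf
    rw [he]
    linarith
  have hE : (0 : ℝ) ≤ Real.exp (a ^ 2 * t ^ 2 / 2) := (Real.exp_pos _).le
  nlinarith [norm_nonneg (Complex.cos t + Complex.I * a * Complex.sin t)]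

/-- Step C: difference of powers. -/
lemma stmt5_aux_C (z w : ℂ) (M : ℝ) (hz : ‖z‖ ≤ M) (hw : ‖w‖ ≤ M)
    (n : ℕ) : ‖(z ^ n - w ^ n)‖ ≤ n * M ^ (n - 1) * ‖(z - w)‖ := by
  have hM : 0 ≤ M := (norm_nonneg z).trans hz
  rw [← geom_sum₂_mul, norm_mul]
  gcongr
  calc ‖(∑ i ∈ Finset.range n, z ^ i * w ^ (n - 1 - i))‖
      ≤ ∑ i ∈ Finset.range n, ‖(z ^ i * w ^ (n - 1 - i))‖ :=
        norm_sum_le _ _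
    _ ≤ ∑ _i ∈ Finset.range n, M ^ (n - 1) := by
        apply Finset.sum_le_sum
        intro i hi
        rw [Finset.mem_range] at hi
        have : i + (n - 1 - i) = n - 1 := by omega
        calc ‖(z ^ i * w ^ (n - 1 - i))‖
            = ‖z‖ ^ i * ‖w‖ ^ (n - 1 - i) := by
              simp [map_mul, map_pow]
          _ ≤ M ^ i * M ^ (n - 1 - i) := by gcongr
          _ = M ^ (n - 1) := by rw [← pow_add, this]
    _ = n * M ^ (n - 1) := by simp [mul_comm]

/-- Main quantitative bound. -/
lemma stmt5_main (a R : ℝ) (hR : 0 ≤ R) (x : ℝ) (hx : |x| ≤ R) (n : ℕ) (hn1 : 1 ≤ n)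
    (hn2 : R * (1 + |a|) ≤ n) :
    ‖((Complex.cos ((x : ℂ) / n) + Complex.I * a * Complex.sin ((x : ℂ) / n)) ^ n
      - Complex.exp (Complex.I * a * x))‖
      ≤ Real.exp (a ^ 2 * R ^ 2 / 2) * (1 + |a| + a ^ 2) * R ^ 2 / n := by
  have hnR : (1 : ℝ) ≤ n := by exact_mod_cast hn1
  have hnpos : (0 : ℝ) < n := by linarith
  set t : ℝ := x / n with htdef
  have hcast : (x : ℂ) / (n : ℂ) = ((t : ℝ) : ℂ) := by
    rw [htdef]; push_cast; ring
  have htR : |t| ≤ R / n := by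
    rw [htdef, abs_div, abs_of_pos hnpos]
    exact (div_le_div_iff_of_pos_right hnpos).2 hx
  have hRn : R ≤ n := by nlinarith [abs_nonneg a, mul_nonneg hR (abs_nonneg a)]
  have ht1 : |t| ≤ 1 := htR.trans (by rw [div_le_one hnpos]; exact hRn)
  have hat1 : |a * t| ≤ 1 := by
    rw [abs_mul]
    have h1 : |a| * |t| ≤ |a| * (R / n) :=
      mul_le_mul_of_nonneg_left htR (abs_nonneg a)
    refine h1.trans ?_
    rw [show |a| * (R / n) = |a| * R / n by ring, div_le_one hnpos]
    nlinarith [abs_nonneg a, hR]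
  have hx2 : x ^ 2 ≤ R ^ 2 := by
    nlinarith [mul_le_mul hx hx (abs_nonneg x) hR, _root_.sq_abs x]
  have ht2 : t ^ 2 ≤ R ^ 2 / n ^ 2 := by
    rw [htdef, div_pow]
    exact (div_le_div_iff_of_pos_right (pow_pos hnpos 2)).2 hx2
  set z : ℂ := Complex.cos ((t : ℝ) : ℂ) + Complex.I * a * Complex.sin ((t : ℝ) : ℂ) with hzdef
  set w : ℂ := Complex.exp (Complex.I * a * t) with hwdef
  have hwn : w ^ n = Complex.exp (Complex.I * a * x) := by
    rw [hwdef, ← Complex.exp_nat_mul]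
    congr 1
    have hne : (n : ℂ) ≠ 0 := by
      exact_mod_cast Nat.cast_ne_zero.2 (by omega)
    rw [htdef]
    push_cast
    field_simp
  set M : ℝ := Real.exp (a ^ 2 * t ^ 2 / 2) with hMdef
  have hM1 : (1 : ℝ) ≤ M := by
    rw [hMdef, ← Real.exp_zero]
    exact Real.exp_le_exp.2 (by positivity)
  have hzM : ‖z‖ ≤ M := stmt5_aux_B a t
  have hwM : ‖w‖ ≤ M := by
    have h : ‖w‖ = 1 := by
      rw [hwdef, Complex.norm_exp]
      have h0 : (Complex.I * a * t).re = 0 := by simp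
      rw [h0, Real.exp_zero]
    rw [h]; exact hM1
  have hzw : ‖(z - w)‖ ≤ (1 + |a| + a ^ 2) * t ^ 2 := stmt5_aux_A a t ht1 hat1
  have hC := stmt5_aux_C z w M hzM hwM n
  have hMpow : M ^ (n - 1) ≤ Real.exp (a ^ 2 * R ^ 2 / 2) := by
    rw [hMdef, ← Real.exp_nat_mul]
    apply Real.exp_le_exp.2
    have hn1' : ((n - 1 : ℕ) : ℝ) ≤ n := by
      exact_mod_cast Nat.cast_le.2 (Nat.sub_le n 1)
    have hn1'' : (0 : ℝ) ≤ ((n - 1 : ℕ) : ℝ) := Nat.cast_nonneg _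
    have ha2 : (0 : ℝ) ≤ a ^ 2 := sq_nonneg a
    have hq : a ^ 2 * t ^ 2 / 2 ≤ a ^ 2 * (R ^ 2 / n ^ 2) / 2 := by gcongr
    have hq0 : (0 : ℝ) ≤ a ^ 2 * t ^ 2 / 2 := by positivity
    have step : ((n - 1 : ℕ) : ℝ) * (a ^ 2 * t ^ 2 / 2)
        ≤ (n : ℝ) * (a ^ 2 * (R ^ 2 / n ^ 2) / 2) := by
      nlinarith
    refine step.trans ?_
    have hval : (n : ℝ) * (a ^ 2 * (R ^ 2 / n ^ 2) / 2) = a ^ 2 * R ^ 2 / (2 * n) := by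
      field_simp
    rw [hval]
    apply div_le_div_of_nonneg_left (by positivity) (by positivity)
    linarith
  have key : (n : ℝ) * ((1 + |a| + a ^ 2) * t ^ 2) ≤ (1 + |a| + a ^ 2) * R ^ 2 / n := by
    have h1 : (n : ℝ) * ((1 + |a| + a ^ 2) * t ^ 2)
        ≤ (n : ℝ) * ((1 + |a| + a ^ 2) * (R ^ 2 / n ^ 2)) := by
      have h0 : (0 : ℝ) ≤ 1 + |a| + a ^ 2 := by positivity
      apply mul_le_mul_of_nonneg_left _ (Nat.cast_nonneg n)
      exact mul_le_mul_of_nonneg_left ht2 h0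
    refine h1.trans_eq ?_
    field_simp
  have hE : (0 : ℝ) < Real.exp (a ^ 2 * R ^ 2 / 2) := Real.exp_pos _
  rw [hcast, ← hwn]
  calc ‖(z ^ n - w ^ n)‖ ≤ n * M ^ (n - 1) * ‖(z - w)‖ := hC
    _ ≤ (n : ℝ) * Real.exp (a ^ 2 * R ^ 2 / 2) * ((1 + |a| + a ^ 2) * t ^ 2) :=
        mul_le_mul (mul_le_mul_of_nonneg_left hMpow (Nat.cast_nonneg n)) hzw
          (norm_nonneg _) (by positivity)
    _ = Real.exp (a ^ 2 * R ^ 2 / 2) * ((n : ℝ) * ((1 + |a| + a ^ 2) * t ^ 2)) := by ring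
    _ ≤ Real.exp (a ^ 2 * R ^ 2 / 2) * ((1 + |a| + a ^ 2) * R ^ 2 / n) :=
        mul_le_mul_of_nonneg_left key hE.le
    _ = Real.exp (a ^ 2 * R ^ 2 / 2) * (1 + |a| + a ^ 2) * R ^ 2 / n := by ring

lemma stmt5_unif (a : ℝ) (S : Set ℝ) (hS : IsCompact S) :
    TendstoUniformlyOn
      (fun (n : ℕ) (x : ℝ) =>
        (Complex.cos (x / n) + Complex.I * a * Complex.sin (x / n)) ^ n)
      (fun x => Complex.exp (Complex.I * a * x)) atTop S := by
  obtain ⟨r, hr⟩ := hS.isBounded.subset_closedBall 0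
  set R : ℝ := max r 0 with hRdef
  have hR : 0 ≤ R := le_max_right _ _
  have hsub : S ⊆ Metric.closedBall 0 R :=
    hr.trans (Metric.closedBall_subset_closedBall (le_max_left _ _))
  rw [Metric.tendstoUniformlyOn_iff]
  intro ε hε
  set C : ℝ := Real.exp (a ^ 2 * R ^ 2 / 2) * (1 + |a| + a ^ 2) * R ^ 2 with hCdef
  have h1 : ∀ᶠ n : ℕ in atTop, C / n < ε :=
    (tendsto_const_div_atTop_nhds_zero_nat C).eventually (eventually_lt_nhds hε)
  have h2 : ∀ᶠ n : ℕ in atTop, R * (1 + |a|) ≤ (n : ℝ) :=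
    tendsto_natCast_atTop_atTop.eventually_ge_atTop _
  filter_upwards [h1, h2, eventually_ge_atTop 1] with n hn1 hn2 hn3 x hxS
  have hx : |x| ≤ R := by
    have := hsub hxS
    rwa [Metric.mem_closedBall, Real.dist_eq, sub_zero] at this
  have hb := stmt5_main a R hR x hx n hn3 hn2
  rw [dist_comm, Complex.dist_eq]
  calc ‖((Complex.cos (x / n) + Complex.I * a * Complex.sin (x / n)) ^ n
        - Complex.exp (Complex.I * a * x))‖ ≤ C / n := hb
    _ < ε := hn1

/-- Pointwise and locally uniform convergence of the superoscillating sequence to `e^{iax}`. -/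
theorem stmt5 (a : ℝ) :
    (∀ x : ℝ, Tendsto
        (fun n : ℕ => (Complex.cos (x / n) + Complex.I * a * Complex.sin (x / n)) ^ n)
        atTop (nhds (Complex.exp (Complex.I * a * x)))) ∧
    (∀ S : Set ℝ, IsCompact S →
      TendstoUniformlyOn
        (fun (n : ℕ) (x : ℝ) =>
          (Complex.cos (x / n) + Complex.I * a * Complex.sin (x / n)) ^ n)
        (fun x => Complex.exp (Complex.I * a * x)) atTop S) := by
  refine ⟨fun x => ?_, fun S hS => stmt5_unif a S hS⟩
  exact (stmt5_unif a {x} isCompact_singleton).tendsto_at rfl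
end

section
/- Let B_n(z) = Π_{j=1}^n (z − a_j)/(1 − ā_j z) be a finite Blaschke product with distinct nonzero simple zeros a_1,...,a_n in the unit disk. Then for all z in the disk, B_n(z) = 1/(conjugate of B_n(0)) + Σ_{j=1}^n c_j / (1 − z ā_j), where c_j = 1/(ā_j · conjugate of B_n'(a_j)). -/
open ComplexConjugate Finset Polynomial

lemma one_sub_mul_ne (x y : ℂ) (hx : ‖x‖ < 1) (hy : ‖y‖ < 1) : 1 - x * y ≠ 0 := by
  intro h
  have h1 : x * y = 1 := by linear_combination -h
  have hxy : ‖x * y‖ < 1 := by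
    rw [norm_mul]
    nlinarith [norm_nonneg x, norm_nonneg y]
  rw [h1] at hxy
  simp at hxy

lemma lagrangeA (n : ℕ) (a p : Fin n → ℂ) (hp : Function.Injective p) (z : ℂ) :
    ∏ j, (z - a j) = ∏ j, (z - p j) +
      ∑ j, (∏ k, (p j - a k)) *
        ∏ k ∈ Finset.univ.erase j, ((p j - p k)⁻¹ * (z - p k)) := by
  set f : ℂ[X] := (∏ j, (X - C (a j))) - ∏ j, (X - C (p j)) with hf
  have hdeg : f.degree < (Finset.univ : Finset (Fin n)).card := by
    by_cases h0 : f = 0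
    · rw [h0, degree_zero]
      exact_mod_cast WithBot.bot_lt_coe _
    · have hm1 : (∏ j, (X - C (a j)) : ℂ[X]).Monic :=
        monic_prod_of_monic _ _ fun i _ => monic_X_sub_C _
      have hm2 : (∏ j, (X - C (p j)) : ℂ[X]).Monic :=
        monic_prod_of_monic _ _ fun i _ => monic_X_sub_C _
      have hd1 : (∏ j, (X - C (a j)) : ℂ[X]).degree = n := by
        rw [degree_prod]
        simp [degree_X_sub_C]
      have hd2 : (∏ j, (X - C (p j)) : ℂ[X]).degree = n := by
        rw [degree_prod]
        simp [degree_X_sub_C]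
      have := degree_sub_lt (hd1.trans hd2.symm) hm1.ne_zero
        (hm1.leadingCoeff.trans hm2.leadingCoeff.symm)
      rw [← hf, hd1] at this
      simpa using this
  have key := Lagrange.eq_interpolate (v := p) (s := Finset.univ) hp.injOn hdeg
  have hev := congrArg (Polynomial.eval z) key
  rw [Lagrange.interpolate_apply, eval_finset_sum] at hev
  have hfz : f.eval z = ∏ j, (z - a j) - ∏ j, (z - p j) := by
    simp [hf, eval_prod]
  rw [hfz] at hev
  rw [sub_eq_iff_eq_add'] at hev
  rw [hev]
  congr 1
  refine Finset.sum_congr rfl fun j _ => ?_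
  have hfpj : f.eval (p j) = ∏ k, (p j - a k) := by
    have : (∏ k, (p j - p k)) = 0 :=
      Finset.prod_eq_zero (Finset.mem_univ j) (sub_self _)
    simp [hf, eval_prod, this]
  rw [eval_mul, eval_C, hfpj]
  congr 1
  rw [Lagrange.basis, eval_prod]
  refine Finset.prod_congr rfl fun k _ => ?_
  simp [Lagrange.basisDivisor]

lemma derivB (n : ℕ) (a : Fin n → ℂ) (hmem : ∀ j, ‖a j‖ < 1)
    (B : ℂ → ℂ) (hB : ∀ z, B z = ∏ j, (z - a j) / (1 - conj (a j) * z)) (i : Fin n) :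
    deriv B (a i) =
      (1 - conj (a i) * a i)⁻¹ *
        ∏ k ∈ Finset.univ.erase i, ((a i - a k) / (1 - conj (a k) * a i)) := by
  have hcnorm : ∀ j, ‖conj (a j)‖ < 1 := fun j => by simpa using hmem j
  have hden : ∀ k, 1 - conj (a k) * a i ≠ 0 := fun k =>
    one_sub_mul_ne _ _ (hcnorm k) (hmem i)
  have hfk : ∀ k, HasDerivAt (fun z => (z - a k) / (1 - conj (a k) * z))
      ((1 * (1 - conj (a k) * a i) - (a i - a k) * (-(conj (a k)))) /
        (1 - conj (a k) * a i) ^ 2) (a i) := by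
    intro k
    have h1 : HasDerivAt (fun z : ℂ => z - a k) 1 (a i) := (hasDerivAt_id _).sub_const _
    have h2 : HasDerivAt (fun z : ℂ => 1 - conj (a k) * z) (-(conj (a k))) (a i) := by
      simpa using ((hasDerivAt_id (a i)).const_mul (conj (a k))).const_sub 1
    exact h1.div h2 (hden k)
  have hB' : B = fun z => ∏ j, (z - a j) / (1 - conj (a j) * z) := funext hB
  have hD : HasDerivAt B
      (∑ j, (∏ k ∈ Finset.univ.erase j, ((a i - a k) / (1 - conj (a k) * a i))) •
        ((1 * (1 - conj (a j) * a i) - (a i - a j) * (-(conj (a j)))) /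
          (1 - conj (a j) * a i) ^ 2)) (a i) := by
    rw [hB']
    exact HasDerivAt.fun_finsetProd fun k _ => hfk k
  rw [hD.deriv]
  rw [Finset.sum_eq_single i]
  · rw [sub_self, zero_mul, sub_zero, one_mul, smul_eq_mul, sq,
      div_mul_eq_div_div, div_self (hden i), one_div, mul_comm]
  · intro j _ hji
    have : (∏ k ∈ Finset.univ.erase j, ((a i - a k) / (1 - conj (a k) * a i))) = 0 := by
      refine Finset.prod_eq_zero (Finset.mem_erase.mpr ⟨hji.symm, Finset.mem_univ i⟩) ?_
      rw [sub_self, zero_div]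
    rw [this, zero_smul]
  · intro h; exact absurd (Finset.mem_univ i) h

/-- Partial-fraction expansion of a finite Blaschke product with distinct nonzero
simple zeros in terms of Szegő kernel sections. -/
theorem stmt14 (n : ℕ) (a : Fin n → ℂ)
    (hdist : Function.Injective a) (hne : ∀ j, a j ≠ 0) (hmem : ∀ j, ‖a j‖ < 1)
    (B : ℂ → ℂ) (hB : ∀ z, B z = ∏ j, (z - a j) / (1 - conj (a j) * z))
    (z : ℂ) (hz : ‖z‖ < 1) :
    B z = 1 / conj (B 0) +
      ∑ j, (1 / (conj (a j) * conj (deriv B (a j)))) / (1 - z * conj (a j)) := by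
  classical
  have hcnorm : ∀ j, ‖(conj (a j) : ℂ)‖ < 1 := fun j => by simpa using hmem j
  have hcne : ∀ j, (conj (a j) : ℂ) ≠ 0 := fun j h => hne j (by simpa using h)
  have hcinj : ∀ j k, conj (a j) = conj (a k) → j = k := fun j k h =>
    hdist ((starRingEnd ℂ).injective h)
  have hcc : ∀ j k, j ≠ k → conj (a j) - conj (a k) ≠ 0 := fun j k h =>
    sub_ne_zero.mpr fun e => h (hcinj j k e)
  have hcd : ∀ i, conj (deriv B (a i)) =
      (1 - a i * conj (a i))⁻¹ *
        ∏ k ∈ Finset.univ.erase i, ((conj (a i) - conj (a k)) / (1 - a k * conj (a i))) := by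
    intro i
    rw [derivB n a hmem B hB i, map_mul, map_inv₀, map_prod]
    simp [map_div₀, map_sub, map_one, map_mul]
  set p : Fin n → ℂ := fun j => (conj (a j))⁻¹ with hp
  have hpinj : Function.Injective p := fun i j h => hcinj i j (inv_injective h)
  have hzne : ∀ j, (1 - conj (a j) * z) ≠ 0 := fun j => one_sub_mul_ne _ _ (hcnorm j) hz
  have hdenk : ∀ k i, (1 - a k * conj (a i) : ℂ) ≠ 0 := fun k i =>
    one_sub_mul_ne _ _ (hmem k) (hcnorm i)
  have hB0 : conj (B 0) = ∏ j, (-(conj (a j))) := by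
    rw [hB 0, map_prod]
    simp
  have hDne : (∏ j, (1 - conj (a j) * z)) ≠ 0 :=
    Finset.prod_ne_zero_iff.mpr fun j _ => hzne j
  refine mul_right_cancel₀ hDne ?_
  have lhs_eq : B z * ∏ j, (1 - conj (a j) * z) = ∏ j, (z - a j) := by
    rw [hB z, ← Finset.prod_mul_distrib]
    exact Finset.prod_congr rfl fun j _ => div_mul_cancel₀ _ (hzne j)
  rw [lhs_eq, lagrangeA n a p hpinj z, add_mul, Finset.sum_mul]
  congr 1
  · rw [hB0, one_div, ← Finset.prod_inv_distrib, ← Finset.prod_mul_distrib]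
    refine Finset.prod_congr rfl fun j _ => ?_
    rw [hp]
    field_simp [hcne j]
    ring
  · refine Finset.sum_congr rfl fun j _ => ?_
    rw [hcd j, ← Finset.mul_prod_erase _ (fun k => 1 - conj (a k) * z) (Finset.mem_univ j),
      ← Finset.mul_prod_erase _ (fun k => p j - a k) (Finset.mem_univ j)]
    set R : ℂ := ∏ k ∈ Finset.univ.erase j,
      ((conj (a j) - conj (a k)) / (1 - a k * conj (a j))) with hR
    have hRne : R ≠ 0 := by
      rw [hR]
      refine Finset.prod_ne_zero_iff.mpr fun k hk => ?_
      exact div_ne_zero (hcc j k fun e => (Finset.mem_erase.mp hk).1 e.symm) (hdenk k j)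
    have key : ∀ k ∈ Finset.univ.erase j,
        (p j - a k) * ((p j - p k)⁻¹ * (z - p k)) =
          ((conj (a j) - conj (a k)) / (1 - a k * conj (a j)))⁻¹ * (1 - conj (a k) * z) := by
      intro k hk
      have hkj : k ≠ j := (Finset.mem_erase.mp hk).1
      have h2 : conj (a j) - conj (a k) ≠ 0 := hcc j k fun e => hkj e.symm
      have h4 : conj (a k) - conj (a j) ≠ 0 := hcc k j hkj
      simp only [hp]
      rw [show ((conj (a j))⁻¹ - (conj (a k))⁻¹ : ℂ) =
          (conj (a k) - conj (a j)) * ((conj (a j))⁻¹ * (conj (a k))⁻¹) from by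
        field_simp
        rw [div_sub_div _ _ (hcne j) (hcne k), one_mul, mul_one]]
      field_simp [hcne j, hcne k, h4, hdenk k j]
      ring
    have hAB : ∏ k ∈ Finset.univ.erase j, ((p j - a k) * ((p j - p k)⁻¹ * (z - p k))) =
        R⁻¹ * ∏ k ∈ Finset.univ.erase j, (1 - conj (a k) * z) := by
      rw [Finset.prod_congr rfl key, Finset.prod_mul_distrib, Finset.prod_inv_distrib, hR]
    rw [mul_assoc, ← Finset.prod_mul_distrib, hAB]
    have hpj : p j = (conj (a j))⁻¹ := rfl
    rw [hpj]
    have hcomm : (1 : ℂ) - z * conj (a j) = 1 - conj (a j) * z := by ring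
    rw [hcomm]
    have step : ∀ d P x : ℂ, x ≠ 0 → d / x * (x * P) = d * P := by
      intro d P x hx
      field_simp
    rw [step _ _ _ (hzne j), ← mul_assoc]
    have hco : ((conj (a j))⁻¹ - a j) * R⁻¹ =
        1 / (conj (a j) * ((1 - a j * conj (a j))⁻¹ * R)) := by
      field_simp [hcne j, hRne, hdenk j j]
    rw [hco]
end

section
/- The integral representation H_n(ix)/(2i)^n = (1/√π) ∫_ℝ e^{−(y−x)²} y^n dy holds for all real x and nonnegative integers n. -/
open Real MeasureTheory Finset

lemma integrable_pow_mul_exp (k : ℕ) :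
    Integrable fun y : ℝ => Real.exp (-y ^ 2) * y ^ k := by
  have h := integrable_rpow_mul_exp_neg_mul_sq (b := 1) one_pos (s := (k : ℝ))
    (lt_of_lt_of_le neg_one_lt_zero (Nat.cast_nonneg k))
  simpa [Real.rpow_natCast, mul_comm] using h

lemma moment_odd (k : ℕ) (hk : Odd k) : (∫ y : ℝ, Real.exp (-y ^ 2) * y ^ k) = 0 := by
  have h := integral_neg_eq_self (fun y : ℝ => Real.exp (-y ^ 2) * y ^ k) volume
  simp only [neg_sq, hk.neg_pow, mul_neg, integral_neg] at h
  linarith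

lemma Gamma_half (m : ℕ) :
    Real.Gamma (m + 1 / 2) = Real.sqrt Real.pi * (2 * m).factorial / (4 ^ m * m.factorial) := by
  induction m with
  | zero => simpa using Real.Gamma_one_half_eq
  | succ m ih =>
    have h0 : ((m : ℝ) + 1 / 2) ≠ 0 := by positivity
    have h1 : ((m + 1 : ℕ) : ℝ) + 1 / 2 = ((m : ℝ) + 1 / 2) + 1 := by push_cast; ring
    rw [h1, Real.Gamma_add_one h0, ih]
    have h2 : (2 * (m + 1)) = (2 * m + 1) + 1 := by ring
    rw [h2, Nat.factorial_succ, Nat.factorial_succ, Nat.factorial_succ m]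
    push_cast
    field_simp
    ring

lemma moment_even (m : ℕ) :
    (∫ y : ℝ, Real.exp (-y ^ 2) * y ^ (2 * m)) =
      Real.sqrt Real.pi * (2 * m).factorial / (4 ^ m * m.factorial) := by
  have h1 : (∫ y : ℝ, Real.exp (-y ^ 2) * y ^ (2 * m)) =
      ∫ y : ℝ, (fun t : ℝ => Real.exp (-t ^ 2) * t ^ (2 * m)) |y| := by
    congr 1; funext y
    simp only [pow_mul, sq_abs]
  have h2 := integral_comp_abs (f := fun t : ℝ => Real.exp (-t ^ 2) * t ^ (2 * m))
  have h3 : (∫ t in Set.Ioi (0 : ℝ), Real.exp (-t ^ 2) * t ^ (2 * m)) =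
      ∫ t in Set.Ioi (0 : ℝ), t ^ ((2 * m : ℕ) : ℝ) * Real.exp (-t ^ ((2 : ℕ) : ℝ)) := by
    refine setIntegral_congr_fun measurableSet_Ioi fun t ht => ?_
    rw [Real.rpow_natCast, Real.rpow_natCast]
    ring
  have h4 := integral_rpow_mul_exp_neg_rpow (p := ((2 : ℕ) : ℝ)) (q := ((2 * m : ℕ) : ℝ))
    (by norm_num) (lt_of_lt_of_le neg_one_lt_zero (Nat.cast_nonneg _))
  have h5 : (((2 * m : ℕ) : ℝ) + 1) / ((2 : ℕ) : ℝ) = (m : ℝ) + 1 / 2 := by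
    push_cast; ring
  rw [h1, h2, h3, h4, h5, Gamma_half]
  push_cast
  ring


/-- The physicists' Hermite polynomial, extended to complex argument. -/
noncomputable def hermitePoly (n : ℕ) (x : ℂ) : ℂ :=
  (Nat.factorial n : ℂ) * ∑ m ∈ Finset.range (n / 2 + 1),
    (-1) ^ m * (2 * x) ^ (n - 2 * m) /
      ((Nat.factorial m : ℂ) * (Nat.factorial (n - 2 * m) : ℂ))

/-- Integral representation `H_n(ix)/(2i)^n = (1/√π) ∫ e^{-(y-x)²} yⁿ dy`. -/
theorem stmt18 (n : ℕ) (x : ℝ) :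
    hermitePoly n (Complex.I * x) / (2 * Complex.I) ^ n =
      (((1 / Real.sqrt Real.pi) * ∫ y : ℝ, Real.exp (-(y - x) ^ 2) * y ^ n : ℝ) : ℂ) := by
  -- Step 1: shift the integral
  have shift : (∫ y : ℝ, Real.exp (-(y - x) ^ 2) * y ^ n) =
      ∫ y : ℝ, Real.exp (-y ^ 2) * (y + x) ^ n := by
    have h := integral_add_right_eq_self (μ := volume)
      (fun y : ℝ => Real.exp (-(y - x) ^ 2) * y ^ n) x
    rw [← h]
    congr 1; funext y
    simp [add_sub_cancel_right]
  -- Step 2: binomial expansion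
  have expand : (∫ y : ℝ, Real.exp (-y ^ 2) * (y + x) ^ n) =
      ∑ k ∈ range (n + 1),
        (∫ y : ℝ, Real.exp (-y ^ 2) * y ^ k) * (x ^ (n - k) * (n.choose k)) := by
    have hfn : (fun y : ℝ => Real.exp (-y ^ 2) * (y + x) ^ n) =
        fun y => ∑ k ∈ range (n + 1),
          (Real.exp (-y ^ 2) * y ^ k) * (x ^ (n - k) * (n.choose k)) := by
      funext y
      rw [add_pow, Finset.mul_sum]
      refine Finset.sum_congr rfl fun k _ => by push_cast; ring
    rw [hfn, integral_finset_sum _ fun k _ => (integrable_pow_mul_exp k).mul_const _]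
    exact Finset.sum_congr rfl fun k _ => integral_mul_const _ _
  -- Step 3: drop odd terms and reindex
  have reindex : (∑ k ∈ range (n + 1),
        (∫ y : ℝ, Real.exp (-y ^ 2) * y ^ k) * (x ^ (n - k) * (n.choose k))) =
      ∑ m ∈ range (n / 2 + 1),
        (Real.sqrt Real.pi * (2 * m).factorial / (4 ^ m * m.factorial)) *
          (x ^ (n - 2 * m) * (n.choose (2 * m))) := by
    rw [← Finset.sum_filter_of_ne (p := fun k => Even k) (by
      intro k _ hne
      by_contra hk
      exact hne (by rw [moment_odd k (Nat.not_even_iff_odd.mp hk), zero_mul]))]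
    refine Finset.sum_nbij' (fun k => k / 2) (fun m => 2 * m) ?_ ?_ ?_ ?_ ?_
    · intro k hk
      simp only [mem_filter, mem_range] at hk ⊢
      omega
    · intro m hm
      simp only [mem_filter, mem_range] at hm ⊢
      exact ⟨by omega, ⟨m, by ring⟩⟩
    · intro k hk
      simp only [mem_filter, mem_range] at hk
      obtain ⟨_, j, hj⟩ := hk
      show 2 * (k / 2) = k
      omega
    · intro m hm
      show 2 * m / 2 = m
      omega
    · intro k hk
      simp only [mem_filter, mem_range] at hk
      obtain ⟨-, j, hj⟩ := hk
      subst hj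
      have h2 : j + j = 2 * j := by ring
      simp only [h2]
      rw [moment_even, Nat.mul_div_cancel_left j (by norm_num)]
  rw [shift, expand, reindex, hermitePoly, Finset.mul_sum, Finset.sum_div]
  push_cast
  rw [Finset.mul_sum]
  refine Finset.sum_congr rfl fun m hm => ?_
  have h2m : 2 * m ≤ n := by
    have := Finset.mem_range.mp hm; omega
  have hsplit : n - 2 * m + 2 * m = n := Nat.sub_add_cancel h2m
  have hpow : (2 * Complex.I) ^ n = (2 * Complex.I) ^ (n - 2 * m) * ((-1 : ℂ)) ^ m * 4 ^ m := by
    conv_lhs => rw [← hsplit]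
    rw [pow_add, pow_mul]
    have h2 : (2 * Complex.I) ^ 2 = (-4 : ℂ) := by
      rw [mul_pow, Complex.I_sq]; ring
    rw [h2, neg_pow]
    ring
  have hfact : (n.factorial : ℂ) =
      (n.choose (2 * m)) * (2 * m).factorial * (n - 2 * m).factorial := by
    exact_mod_cast (congrArg (fun t : ℕ => (t : ℂ))
      (Nat.choose_mul_factorial_mul_factorial h2m)).symm
  have harg : (2 * (Complex.I * (x : ℂ))) ^ (n - 2 * m) =
      (2 * Complex.I) ^ (n - 2 * m) * (x : ℂ) ^ (n - 2 * m) := by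
    rw [← mul_pow]; ring_nf
  rw [harg, hpow, hfact]
  have hI : (2 * Complex.I) ^ (n - 2 * m) ≠ 0 :=
    pow_ne_zero _ (by simp [Complex.I_ne_zero])
  have hs : ((Real.sqrt Real.pi : ℝ) : ℂ) ≠ 0 := by
    simp [Real.sqrt_ne_zero', Real.pi_pos]
  have hm1 : ((m.factorial : ℕ) : ℂ) ≠ 0 := Nat.cast_ne_zero.mpr m.factorial_ne_zero
  have hm2 : (((2 * m).factorial : ℕ) : ℂ) ≠ 0 := Nat.cast_ne_zero.mpr (2 * m).factorial_ne_zero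
  have hm3 : (((n - 2 * m).factorial : ℕ) : ℂ) ≠ 0 :=
    Nat.cast_ne_zero.mpr (n - 2 * m).factorial_ne_zero
  have h4 : ((4 : ℂ)) ^ m ≠ 0 := pow_ne_zero _ (by norm_num)
  have hneg : ((-1 : ℂ)) ^ m ≠ 0 := pow_ne_zero _ (by norm_num)
  field_simp
end
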